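/- arXiv:2206.09638 — 3 statements merged into one kernel-verified Lean document; each statement's English description precedes it below -/
import Mathlib

section
/- Let f : (Fin n → Bool) → Bool be a Boolean decision function and x : Fin n → Bool a data instance with f x = false. Then a set S ⊆ Fin n is a counterfactual explanation of x with respect to f if and only if S is an MCS of Σ_f ∧ Σ_x over the soft clauses Σ_x. Concretely: [f (flip x S) = true ∧ ∀ T ⊊ S, f (flip x T) = false] ↔ [(∃ μ, (∀ i ∉ S, μ i = x i) ∧ f μ = true) ∧ ∀ T ⊊ S, ¬∃ μ, (∀ i ∉ T, μ i = x i) ∧ f μ = true]. -/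
/-- `cfFlip x S` is the instance equal to `x` outside `S` and with the Boolean
value negated at every index in `S`. -/
def cfFlip {n : ℕ} (x : Fin n → Bool) (S : Finset (Fin n)) : Fin n → Bool :=
  fun i => if i ∈ S then !(x i) else x i

lemma mu_eq_flip {n : ℕ} (x μ : Fin n → Bool) (T : Finset (Fin n))
    (h : ∀ i ∉ T, μ i = x i) :
    μ = cfFlip x (T.filter (fun i => μ i ≠ x i)) := by
  funext i
  unfold cfFlip
  by_cases hi : i ∈ T.filter (fun i => μ i ≠ x i)
  · simp only [hi, if_pos]
    have := (Finset.mem_filter.mp hi).2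
    cases hxi : x i <;> cases hmi : μ i <;> simp_all
  · simp only [hi, if_neg]
    by_cases ht : i ∈ T
    · by_contra hne
      exact hi (Finset.mem_filter.mpr ⟨ht, hne⟩)
    · exact h i ht

/-- For `f x = false`, `S` is a counterfactual explanation of `x`
w.r.t. `f` iff `S` is an MCS of `Σ_f ∧ Σ_x` over the soft clauses `Σ_x`. -/
theorem counterfactual_iff_mcs (n : ℕ) (f : (Fin n → Bool) → Bool) (x : Fin n → Bool)
    (hx : f x = false) (S : Finset (Fin n)) :
    (f (cfFlip x S) = true ∧ ∀ T ⊂ S, f (cfFlip x T) = false) ↔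
      ((∃ μ : Fin n → Bool, (∀ i ∉ S, μ i = x i) ∧ f μ = true) ∧
        ∀ T ⊂ S, ¬ ∃ μ : Fin n → Bool, (∀ i ∉ T, μ i = x i) ∧ f μ = true) := by
  constructor
  · rintro ⟨hS, hmin⟩
    constructor
    · exact ⟨cfFlip x S, fun i hi => by simp [cfFlip, hi], hS⟩
    · rintro T hT ⟨μ, hμ, hfμ⟩
      have := mu_eq_flip x μ T hμ
      have hsub : T.filter (fun i => μ i ≠ x i) ⊂ S :=
        lt_of_le_of_lt (Finset.filter_subset _ _) hT
      have := hmin _ hsub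
      rw [← mu_eq_flip x μ T hμ] at this
      simp [hfμ] at this
  · rintro ⟨⟨μ, hμ, hfμ⟩, hmin⟩
    have hflip : ∀ T ⊂ S, f (cfFlip x T) = false := by
      intro T hT
      by_contra h
      exact hmin T hT ⟨cfFlip x T, fun i hi => by simp [cfFlip, hi],
        by simpa using h⟩
    refine ⟨?_, hflip⟩
    set D := S.filter (fun i => μ i ≠ x i) with hD
    have hμD : μ = cfFlip x D := mu_eq_flip x μ S hμ
    by_cases hDS : D = S
    · rw [← hDS, ← hμD]; exact hfμ
    · have : D ⊂ S := Finset.ssubset_iff_subset_ne.mpr ⟨Finset.filter_subset _ _, hDS⟩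
      have := hflip D this
      rw [← hμD, hfμ] at this
      exact absurd this (by simp)
end

section
/- Let f : (Fin n → Bool) → Bool be a Boolean decision function and x : Fin n → Bool a data instance with f x = false. If S ⊆ Fin n is an MCS of Σ_f ∧ Σ_x over the soft clauses Σ_x (i.e. S is minimal such that there exists μ with f μ = true and μ i = x i for all i ∉ S), then S is a counterfactual explanation of x: f (flip x S) = true and f (flip x T) = false for every proper subset T ⊊ S. -/
/-- If `S` is an MCS of `Σ_f ∧ Σ_x` over the soft clauses `Σ_x`,
then `S` is a counterfactual explanation of `x`. -/
theorem mcs_is_counterfactual (n : ℕ) (f : (Fin n → Bool) → Bool) (x : Fin n → Bool)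
    (hx : f x = false) (S : Finset (Fin n))
    (hsat : ∃ μ : Fin n → Bool, f μ = true ∧ ∀ i ∉ S, μ i = x i)
    (hmin : ∀ T ⊂ S, ¬ ∃ μ : Fin n → Bool, f μ = true ∧ ∀ i ∉ T, μ i = x i) :
    f (cfFlip x S) = true ∧ ∀ T ⊂ S, f (cfFlip x T) = false := by
  obtain ⟨μ, hμt, hμx⟩ := hsat
  set T : Finset (Fin n) := S.filter (fun i => μ i ≠ x i) with hT
  have hTS : T ⊆ S := Finset.filter_subset _ _
  have hμeq : μ = cfFlip x T := by
    funext i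
    by_cases hi : i ∈ T
    · simp only [cfFlip, if_pos hi]
      have : μ i ≠ x i := (Finset.mem_filter.mp hi).2
      cases h : x i <;> cases h' : μ i <;> simp_all
    · simp only [cfFlip, if_neg hi]
      by_cases hiS : i ∈ S
      · by_contra hne
        exact hi (Finset.mem_filter.mpr ⟨hiS, hne⟩)
      · exact hμx i hiS
  have hTeq : T = S := by
    by_contra hne
    exact hmin T (lt_of_le_of_ne hTS hne) ⟨μ, hμt, fun i hi => by
      by_cases hiS : i ∈ S
      · by_contra hne'
        exact hi (Finset.mem_filter.mpr ⟨hiS, hne'⟩)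
      · exact hμx i hiS⟩
  constructor
  · rw [← hTeq, ← hμeq]; exact hμt
  · intro U hU
    by_contra h
    have htrue : f (cfFlip x U) = true := by
      cases h' : f (cfFlip x U)
      · exact absurd h' h
      · rfl
    exact hmin U hU ⟨cfFlip x U, htrue, fun i hi => by simp [cfFlip, hi]⟩
end

section
/- Let f : (Fin n → Bool) → Bool be a Boolean decision function and x : Fin n → Bool a data instance with f x = false. If S ⊆ Fin n is a counterfactual explanation of x (f (flip x S) = true and no proper subset T ⊊ S satisfies f (flip x T) = true), then S is an MCS of Σ_f ∧ Σ_x over the soft clauses Σ_x: there exists μ with f μ = true and μ i = x i for all i ∉ S, and no proper subset T ⊊ S admits such a μ. -/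
/-- If `S` is a counterfactual explanation of `x` (with `f x = false`),
then `S` is an MCS of `Σ_f ∧ Σ_x` over the soft clauses `Σ_x`. -/
theorem counterfactual_is_mcs (n : ℕ) (f : (Fin n → Bool) → Bool) (x : Fin n → Bool)
    (hx : f x = false) (S : Finset (Fin n))
    (hflip : f (cfFlip x S) = true)
    (hmin : ∀ T ⊂ S, ¬ f (cfFlip x T) = true) :
    (∃ μ : Fin n → Bool, f μ = true ∧ ∀ i ∉ S, μ i = x i) ∧
      ∀ T ⊂ S, ¬ ∃ μ : Fin n → Bool, f μ = true ∧ ∀ i ∉ T, μ i = x i := by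
  constructor
  · exact ⟨cfFlip x S, hflip, fun i hi => by simp [cfFlip, hi]⟩
  · rintro T hT ⟨μ, hμ, hagree⟩
    set U : Finset (Fin n) := T.filter (fun i => μ i ≠ x i) with hU
    have hμeq : μ = cfFlip x U := by
      funext i
      by_cases hi : i ∈ U
      · have : μ i ≠ x i := (Finset.mem_filter.mp hi).2
        simp only [cfFlip, if_pos hi]
        cases h : x i <;> cases h' : μ i <;> simp_all
      · simp only [cfFlip, if_neg hi]
        by_cases hiT : i ∈ T
        · by_contra hne
          exact hi (Finset.mem_filter.mpr ⟨hiT, hne⟩)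
        · exact hagree i hiT
    exact hmin U (lt_of_le_of_lt (Finset.filter_subset _ _) hT) (hμeq ▸ hμ)
end
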